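/- arXiv:1110.1911 — 2 statements merged into one kernel-verified Lean document; each statement's English description precedes it below -/
import Mathlib

section
/- Let X be a compact metric space with diameter at most 1 and let T : X → X be a topologically transitive homeomorphism satisfying the closing property. Let α ∈ (0,1] and let ψ : X → ℂ be an α-Hölder-continuous function satisfying the periodic orbit obstruction condition: for every p ∈ X and k ≥ 1 with T^k p = p one has Σ_{j=0}^{k−1} ψ(T^j p) = 0. Then there exists an α-Hölder-continuous function φ : X → ℂ such that φ(T x) − φ(x) = ψ(x) for every x ∈ X. -/
/-!
Closing a nearly periodic orbit segment `x, T x, …, T^[k] x` to a periodic orbit `p` and comparing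
`ψ` along the two (its sum over `p` vanishes) bounds the Birkhoff sum by
`K * dist x (T^[k] x) ^ α`; the exponential shadowing makes the error terms geometrically
summable. So along a dense orbit `n ↦ birkhoffSum T ψ n x₀` is α-Hölder in `T^[n] x₀` on small
scales, extends to an α-Hölder `φ` on `X`, and `φ (T x) - φ x = ψ x`, true on the orbit, holds
everywhere by continuity. Compactness turns the small-scale bound into a global one.
-/

open Finset Function

theorem sum_range_pow_min_le_of_lt_one {r : ℝ} (hr₀ : 0 ≤ r) (hr₁ : r < 1) (k : ℕ) :
    ∑ j ∈ range k, r ^ min j (k - j) ≤ 2 / (1 - r) := by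
  have hgeom : ∑ j ∈ range k, r ^ j ≤ 1 / (1 - r) := by
    have h := geom_sum_Ico_le_of_lt_one (m := 0) (n := k) hr₀ hr₁
    rwa [pow_zero, ← range_eq_Ico] at h
  have hmin : ∀ j ∈ range k, r ^ min j (k - j) ≤ r ^ j + r ^ (k - 1 - j) := by
    intro j _
    rcases min_cases j (k - j) with ⟨h, -⟩ | ⟨h, -⟩ <;> rw [h]
    · exact le_add_of_nonneg_right (by positivity)
    · exact le_add_of_nonneg_of_le (by positivity) (pow_le_pow_of_le_one hr₀ hr₁.le (by omega))
  calc ∑ j ∈ range k, r ^ min j (k - j)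
      ≤ ∑ j ∈ range k, (r ^ j + r ^ (k - 1 - j)) := sum_le_sum hmin
    _ = 2 * ∑ j ∈ range k, r ^ j := by
      rw [sum_add_distrib, sum_range_reflect (fun j => r ^ j)]; ring
    _ ≤ 2 * (1 / (1 - r)) := by gcongr
    _ = 2 / (1 - r) := by ring

theorem one_sub_exp_neg_pos {a : ℝ} (ha : 0 < a) : 0 < 1 - Real.exp (-a) := by
  simpa using ha

section Holder

variable {X E : Type*} [PseudoMetricSpace X]

theorem uniformContinuous_of_norm_sub_le_mul_rpow [SeminormedAddCommGroup E] {f : X → E}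
    {K α δ : ℝ} (hα : 0 < α) (hδ : 0 < δ)
    (h : ∀ x y, dist x y < δ → ‖f x - f y‖ ≤ K * dist x y ^ α) :
    UniformContinuous f := by
  have hlim : Filter.Tendsto (fun t : ℝ => K * t ^ α) (nhds 0) (nhds 0) := by
    simpa [Real.zero_rpow hα.ne'] using
      ((Real.continuousAt_rpow_const 0 α (Or.inr hα.le)).tendsto).const_mul K
  rw [Metric.uniformContinuous_iff]
  intro ε hε
  obtain ⟨η, hη, hηε⟩ := Metric.tendsto_nhds_nhds.mp hlim ε hε
  refine ⟨min δ η, lt_min hδ hη, fun {x y} hxy => ?_⟩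
  have hclose : dist (K * dist x y ^ α) 0 < ε :=
    hηε (by simpa using hxy.trans_le (min_le_right _ _))
  rw [dist_eq_norm]
  calc ‖f x - f y‖ ≤ K * dist x y ^ α := h x y (hxy.trans_le (min_le_left _ _))
    _ ≤ dist (K * dist x y ^ α) 0 := by rw [Real.dist_0_eq_abs]; exact le_abs_self _
    _ < ε := hclose

theorem exists_norm_sub_le_mul_rpow_of_isBounded [SeminormedAddCommGroup E] {φ : X → E}
    (hb : Bornology.IsBounded (Set.range φ)) {K α δ : ℝ} (hK : 0 < K) (hα : 0 ≤ α) (hδ : 0 < δ)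
    (h : ∀ x y, dist x y < δ → ‖φ x - φ y‖ ≤ K * dist x y ^ α) :
    ∃ C > 0, ∀ x y, ‖φ x - φ y‖ ≤ C * dist x y ^ α := by
  obtain ⟨R, hR, hφR⟩ := hb.exists_pos_norm_le
  have hδα : 0 < δ ^ α := Real.rpow_pos_of_pos hδ α
  refine ⟨K + 2 * R / δ ^ α, by positivity, fun x y => ?_⟩
  have hdα : 0 ≤ dist x y ^ α := Real.rpow_nonneg dist_nonneg α
  rcases lt_or_ge (dist x y) δ with hxy | hxy
  · calc ‖φ x - φ y‖ ≤ K * dist x y ^ α := h x y hxy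
      _ ≤ (K + 2 * R / δ ^ α) * dist x y ^ α := by gcongr; exact le_add_of_nonneg_right (by positivity)
  · calc ‖φ x - φ y‖ ≤ ‖φ x‖ + ‖φ y‖ := norm_sub_le _ _
      _ ≤ 2 * R := by linarith [hφR _ ⟨x, rfl⟩, hφR _ ⟨y, rfl⟩]
      _ = 2 * R / δ ^ α * δ ^ α := by field_simp
      _ ≤ 2 * R / δ ^ α * dist x y ^ α := by gcongr
      _ ≤ (K + 2 * R / δ ^ α) * dist x y ^ α := by gcongr; exact le_add_of_nonneg_left hK.le

theorem exists_extension_of_norm_sub_le_mul_rpow [NormedAddCommGroup E] [CompleteSpace E]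
    {ι : Type*} {u : ι → X} (hu : DenseRange u) {g : ι → E} {K α δ : ℝ} (hα : 0 < α)
    (hδ : 0 < δ) (hg : ∀ i j, dist (u i) (u j) < δ → ‖g i - g j‖ ≤ K * dist (u i) (u j) ^ α) :
    ∃ φ : X → E, (∀ i, φ (u i) = g i) ∧
      ∀ x y, dist x y < δ → ‖φ x - φ y‖ ≤ K * dist x y ^ α := by
  have hfactor : ∀ i j, u i = u j → g i = g j := by
    intro i j hij
    have := hg i j (by rwa [hij, dist_self])
    rw [hij, dist_self, Real.zero_rpow hα.ne', mul_zero] at this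
    exact sub_eq_zero.mp (norm_le_zero_iff.mp this)
  let f : Set.range u → E := fun a => g a.2.choose
  have hf : ∀ i, f ⟨u i, i, rfl⟩ = g i := fun i => hfactor _ _ (Set.mem_range_self i).choose_spec
  have hfuc : UniformContinuous f := by
    refine uniformContinuous_of_norm_sub_le_mul_rpow (K := K) hα hδ ?_
    rintro ⟨_, i, rfl⟩ ⟨_, j, rfl⟩ hij
    rw [hf, hf]
    exact hg i j hij
  have hind : IsUniformInducing ((↑) : Set.range u → X) :=
    isUniformEmbedding_subtype_val.isUniformInducing
  have hdense : DenseRange ((↑) : Set.range u → X) := Dense.denseRange_val hu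
  let φ := (hind.isDenseInducing hdense).extend f
  have hφu : ∀ i, φ (u i) = g i := fun i =>
    ((hind.isDenseInducing hdense).extend_eq hfuc.continuous ⟨u i, i, rfl⟩).trans (hf i)
  have hφ : Continuous φ := (uniformContinuous_uniformly_extend hind hdense hfuc).continuous
  -- The bound for close pairs, disjoined with farness, is a closed condition on pairs.
  have hbound : ∀ x y, ‖φ x - φ y‖ ≤ K * dist x y ^ α ∨ δ ≤ dist x y := by
    refine hu.induction_on₂ ?_ fun i j => ?_
    · rw [Set.ofPred_or]
      refine (isClosed_le (by fun_prop) ?_).union (isClosed_le continuous_const continuous_dist)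
      exact continuous_const.mul (continuous_dist.rpow_const fun _ => Or.inr hα.le)
    · rw [hφu, hφu]
      exact (lt_or_ge _ _).imp_left (hg i j)
  exact ⟨φ, hφu, fun x y hxy => (hbound x y).resolve_right hxy.not_ge⟩

end Holder

section Livsic

variable {X E : Type*} [PseudoMetricSpace X] {T : X → X}

theorem norm_birkhoffSum_le_of_shadowing [SeminormedAddCommGroup E] {ψ : X → E}
    {C α c lam d : ℝ} {k : ℕ} {x p : X}
    (hψ : ∀ x y, ‖ψ x - ψ y‖ ≤ C * dist x y ^ α) (hC : 0 ≤ C) (hα : 0 < α) (hc : 0 ≤ c)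
    (hlam : 0 < lam) (hd : 0 ≤ d) (hp : birkhoffSum T ψ k p = 0)
    (hshadow : ∀ j < k,
      dist (T^[j] x) (T^[j] p) ≤ c * d * Real.exp (-lam * (min j (k - j) : ℕ))) :
    ‖birkhoffSum T ψ k x‖ ≤ C * c ^ α * (2 / (1 - Real.exp (-(lam * α)))) * d ^ α := by
  set r := Real.exp (-(lam * α))
  have hr : r < 1 := by
    have := one_sub_exp_neg_pos (mul_pos hlam hα)
    linarith
  have hterm : ∀ j < k,
      ‖ψ (T^[j] x) - ψ (T^[j] p)‖ ≤ C * c ^ α * d ^ α * r ^ min j (k - j) := by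
    intro j hj
    calc ‖ψ (T^[j] x) - ψ (T^[j] p)‖
        ≤ C * (c * d * Real.exp (-lam * (min j (k - j) : ℕ))) ^ α := by
          refine (hψ _ _).trans ?_
          gcongr
          exact hshadow j hj
      _ = C * c ^ α * d ^ α * r ^ min j (k - j) := by
          rw [Real.mul_rpow (by positivity) (Real.exp_pos _).le, Real.mul_rpow hc hd,
            ← Real.exp_mul, ← Real.exp_nat_mul]
          ring_nf
  unfold birkhoffSum at hp ⊢
  calc ‖∑ j ∈ range k, ψ (T^[j] x)‖ = ‖∑ j ∈ range k, (ψ (T^[j] x) - ψ (T^[j] p))‖ := by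
        rw [sum_sub_distrib, hp, sub_zero]
    _ ≤ ∑ j ∈ range k, C * c ^ α * d ^ α * r ^ min j (k - j) :=
        norm_sum_le_of_le _ fun j hj => hterm j (mem_range.mp hj)
    _ ≤ C * c ^ α * d ^ α * (2 / (1 - r)) := by
        rw [← mul_sum]
        gcongr
        exact sum_range_pow_min_le_of_lt_one (Real.exp_pos _).le hr k
    _ = C * c ^ α * (2 / (1 - r)) * d ^ α := by ring

theorem exists_norm_birkhoffSum_le_of_closing [SeminormedAddCommGroup E] {ψ : X → E}
    {C α c lam δ₀ : ℝ} (hψ : ∀ x y, ‖ψ x - ψ y‖ ≤ C * dist x y ^ α) (hC : 0 < C) (hα : 0 < α)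
    (hc : 0 < c) (hlam : 0 < lam)
    (hclosing : ∀ (x : X) (k : ℕ), dist x (T^[k] x) < δ₀ →
      ∃ p : X, T^[k] p = p ∧ ∀ j ≤ k,
        dist (T^[j] x) (T^[j] p) ≤ c * dist x (T^[k] x) * Real.exp (-lam * (min j (k - j) : ℕ)))
    (hPOO : ∀ (p : X) (k : ℕ), 1 ≤ k → T^[k] p = p → birkhoffSum T ψ k p = 0) :
    ∃ K > 0, ∀ (x : X) (k : ℕ), dist x (T^[k] x) < δ₀ →
      ‖birkhoffSum T ψ k x‖ ≤ K * dist x (T^[k] x) ^ α := by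
  have := one_sub_exp_neg_pos (mul_pos hlam hα)
  refine ⟨C * c ^ α * (2 / (1 - Real.exp (-(lam * α)))), by positivity, fun x k hxk => ?_⟩
  obtain ⟨p, hpk, hshadow⟩ := hclosing x k hxk
  have hp : birkhoffSum T ψ k p = 0 := by
    rcases k.eq_zero_or_pos with rfl | hk
    · exact birkhoffSum_zero T ψ p
    · exact hPOO p k hk hpk
  exact norm_birkhoffSum_le_of_shadowing hψ hC.le hα hc.le hlam dist_nonneg hp
    fun j hj => hshadow j hj.le

theorem exists_coboundary_of_norm_birkhoffSum_le [NormedAddCommGroup E] [CompleteSpace E]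
    (hT : Continuous T) {ψ : X → E} (hψ : Continuous ψ) {x₀ : X}
    (hx₀ : DenseRange fun n : ℕ => T^[n] x₀) {K α δ : ℝ} (hα : 0 < α) (hδ : 0 < δ)
    (hsum : ∀ (x : X) (k : ℕ), dist x (T^[k] x) < δ →
      ‖birkhoffSum T ψ k x‖ ≤ K * dist x (T^[k] x) ^ α) :
    ∃ φ : X → E, (∀ x y, dist x y < δ → ‖φ x - φ y‖ ≤ K * dist x y ^ α) ∧
      ∀ x, φ (T x) - φ x = ψ x := by
  have horbit : ∀ n m, dist (T^[n] x₀) (T^[m] x₀) < δ →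
      ‖birkhoffSum T ψ n x₀ - birkhoffSum T ψ m x₀‖ ≤ K * dist (T^[n] x₀) (T^[m] x₀) ^ α := by
    suffices h : ∀ n l, dist (T^[n] x₀) (T^[n + l] x₀) < δ →
        ‖birkhoffSum T ψ n x₀ - birkhoffSum T ψ (n + l) x₀‖ ≤
          K * dist (T^[n] x₀) (T^[n + l] x₀) ^ α by
      intro n m
      rcases le_total n m with hnm | hmn
      · obtain ⟨l, rfl⟩ := Nat.exists_eq_add_of_le hnm
        exact h n l
      · obtain ⟨l, rfl⟩ := Nat.exists_eq_add_of_le hmn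
        rw [dist_comm, norm_sub_rev]
        exact h m l
    intro n l
    rw [birkhoffSum_add, sub_add_cancel_left, norm_neg, add_comm, iterate_add_apply]
    exact hsum _ l
  obtain ⟨φ, hφx₀, hφ⟩ := exists_extension_of_norm_sub_le_mul_rpow hx₀ hα hδ horbit
  have hφc : Continuous φ := (uniformContinuous_of_norm_sub_le_mul_rpow hα hδ hφ).continuous
  refine ⟨φ, hφ, congrFun (hx₀.equalizer ((hφc.comp hT).sub hφc) hψ (funext fun n => ?_))⟩
  simp only [comp_apply, ← iterate_succ_apply' T n x₀, hφx₀, birkhoffSum_succ, add_sub_cancel_left]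

end Livsic

theorem livsic_complex_general
    {X : Type*} [MetricSpace X] [CompactSpace X]
    (T : X → X) (hT : IsHomeomorph T)
    (htrans : ∃ x₀ : X, Dense (Set.range fun n : ℕ => T^[n] x₀))
    (hclosing : ∃ c lam δ₀ : ℝ, 0 < c ∧ 0 < lam ∧ 0 < δ₀ ∧
      ∀ (x : X) (k : ℕ), dist x (T^[k] x) < δ₀ →
        ∃ p : X, T^[k] p = p ∧ ∀ j ≤ k,
          dist (T^[j] x) (T^[j] p) ≤
            c * dist x (T^[k] x) * Real.exp (-lam * (min j (k - j) : ℕ)))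
    (α : ℝ) (hα : α ∈ Set.Ioc (0 : ℝ) 1)
    (ψ : X → ℂ)
    (hψ : ∃ C > 0, ∀ x y : X, ‖ψ x - ψ y‖ ≤ C * dist x y ^ α)
    (hPOO : ∀ (p : X) (k : ℕ), 1 ≤ k → T^[k] p = p →
      ∑ j ∈ Finset.range k, ψ (T^[j] p) = 0) :
    ∃ φ : X → ℂ,
      (∃ C > 0, ∀ x y : X, ‖φ x - φ y‖ ≤ C * dist x y ^ α) ∧
      ∀ x : X, φ (T x) - φ x = ψ x := by
  obtain ⟨x₀, hx₀⟩ := htrans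
  obtain ⟨c, lam, δ₀, hc, hlam, hδ₀, hclose⟩ := hclosing
  obtain ⟨C, hC, hψC⟩ := hψ
  have hψc : Continuous ψ :=
    (uniformContinuous_of_norm_sub_le_mul_rpow hα.1 one_pos fun x y _ => hψC x y).continuous
  obtain ⟨K, hK, hsum⟩ :=
    exists_norm_birkhoffSum_le_of_closing hψC hC hα.1 hc hlam hclose hPOO
  obtain ⟨φ, hφ, hφT⟩ :=
    exists_coboundary_of_norm_birkhoffSum_le hT.continuous hψc hx₀ hα.1 hδ₀ hsum
  have hφc : Continuous φ := (uniformContinuous_of_norm_sub_le_mul_rpow hα.1 hδ₀ hφ).continuous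
  exact ⟨φ, exists_norm_sub_le_mul_rpow_of_isBounded (isCompact_range hφc).isBounded hK
    hα.1.le hδ₀ hφ, hφT⟩

/-- **Livšic's theorem for complex valued cocycles.**
If `T` is a topologically transitive homeomorphism of a compact metric space with
diameter at most 1 satisfying the closing property, and `ψ : X → ℂ` is α-Hölder
continuous and satisfies the periodic orbit obstruction, then the cohomological
equation `φ ∘ T - φ = ψ` has an α-Hölder-continuous solution. -/
theorem livsic_complex
    {X : Type*} [MetricSpace X] [CompactSpace X]
    (hdiam : Metric.diam (Set.univ : Set X) ≤ 1)
    (T : X → X) (hT : IsHomeomorph T)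
    (htrans : ∃ x₀ : X, Dense (Set.range fun n : ℕ => T^[n] x₀))
    (hclosing : ∃ c lam δ₀ : ℝ, 0 < c ∧ 0 < lam ∧ 0 < δ₀ ∧
      ∀ (x : X) (k : ℕ), dist x (T^[k] x) < δ₀ →
        ∃ p : X, T^[k] p = p ∧ ∀ j ≤ k,
          dist (T^[j] x) (T^[j] p) ≤
            c * dist x (T^[k] x) * Real.exp (-lam * (min j (k - j) : ℕ)))
    (α : ℝ) (hα : α ∈ Set.Ioc (0 : ℝ) 1)
    (ψ : X → ℂ)
    (hψ : ∃ C > 0, ∀ x y : X, ‖ψ x - ψ y‖ ≤ C * dist x y ^ α)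
    (hPOO : ∀ (p : X) (k : ℕ), 1 ≤ k → T^[k] p = p →
      ∑ j ∈ Finset.range k, ψ (T^[j] p) = 0) :
    ∃ φ : X → ℂ,
      (∃ C > 0, ∀ x y : X, ‖φ x - φ y‖ ≤ C * dist x y ^ α) ∧
      ∀ x : X, φ (T x) - φ x = ψ x :=
  livsic_complex_general T hT htrans hclosing α hα ψ hψ hPOO
end

section
/- Let X be a compact metric space with diameter at most 1, let d ≥ 1, R > 0, C > 0, α ∈ (0,1], and for each 1 ≤ i ≤ d and each multi-index j ∈ ℕ^d with |j| ≥ 1 let t^i_j : X → ℂ be a (C/R^{|j|}, α)-Hölder-continuous function that vanishes at some point of X. Then: (1) for every x ∈ X and every i, the power series Σ_{|j| ≥ 1} t^i_j(x)·Z^j converges absolutely at every Z = (z₁, …, z_d) ∈ ℂ^d with |z_s| < R for all s; (2) for every δ ∈ (0,1) and all x, y ∈ X, Σ_{i=1}^{d} Σ_{|j| ≥ 1} |t^i_j(x) − t^i_j(y)|²·(δR)^{2|j|} ≤ d·C²·((1 − δ²)^{−d} − 1)·dist(x,y)^{2α}. -/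
/-!
Because each coefficient vanishes somewhere and `diam X ≤ 1`, the Hölder bound gives
`‖t^i_j‖ ≤ C / R^{|j|}`, so the series is dominated by `C ∏ₛ ∑ₙ (‖zₛ‖ / R)ⁿ`. For the
second part each term is at most `C² dist(x,y)^{2α} (δ²)^{|j|}`, and factoring the
multi-index geometric series into `d` one-variable ones gives
`∑_{|j| ≥ 1} (δ²)^{|j|} = (1 - δ²)^{-d} - 1`.
-/

open Finset
open scoped ENNReal

namespace ENNReal

theorem tsum_prod_pow {d : ℕ} (q : Fin d → ℝ≥0∞) :
    ∑' j : Fin d → ℕ, ∏ s, q s ^ j s = ∏ s, (1 - q s)⁻¹ := by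
  induction d with
  | zero => simp
  | succ d ih =>
    rw [← (Fin.consEquiv fun _ => ℕ).tsum_eq, ENNReal.tsum_prod', Fin.prod_univ_succ, ← ih,
      ← ENNReal.tsum_geometric, ← ENNReal.tsum_mul_right]
    simp [Fin.consEquiv, Fin.prod_univ_succ, ENNReal.tsum_mul_left]

theorem tsum_pow_sum {d : ℕ} (q : ℝ≥0∞) :
    ∑' j : Fin d → ℕ, q ^ ∑ s, j s = (1 - q)⁻¹ ^ d := by
  simpa [prod_pow_eq_pow_sum] using tsum_prod_pow fun _ : Fin d => q

theorem tsum_pow_sum_of_one_le {d : ℕ} (q : ℝ≥0∞) :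
    ∑' j : {j : Fin d → ℕ // 1 ≤ ∑ s, j s}, q ^ ∑ s, j.1 s = (1 - q)⁻¹ ^ d - 1 := by
  have hcompl : {j : Fin d → ℕ | 1 ≤ ∑ s, j s}ᶜ = {0} := by
    ext j
    simp [Finset.sum_eq_zero_iff, funext_iff]
  have hsplit := ENNReal.summable.tsum_add_tsum_compl (s := {j : Fin d → ℕ | 1 ≤ ∑ s, j s})
    (f := fun j => q ^ ∑ s, j s) ENNReal.summable
  rw [hcompl, tsum_singleton (0 : Fin d → ℕ) fun j => q ^ ∑ s, j s, tsum_pow_sum] at hsplit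
  simp only [Pi.zero_apply, Finset.sum_const_zero, pow_zero] at hsplit
  exact ENNReal.eq_sub_of_add_eq one_ne_top hsplit

theorem tsum_ofReal_pow_sum_of_one_le {d : ℕ} {r : ℝ} (hr0 : 0 ≤ r) (hr1 : r < 1) :
    ∑' j : {j : Fin d → ℕ // 1 ≤ ∑ s, j s}, ENNReal.ofReal r ^ ∑ s, j.1 s
      = ENNReal.ofReal (((1 - r) ^ d)⁻¹ - 1) := by
  rw [tsum_pow_sum_of_one_le, ENNReal.ofReal_sub _ zero_le_one, ENNReal.ofReal_one,
    ENNReal.ofReal_inv_of_pos (pow_pos (sub_pos.2 hr1) d), ENNReal.ofReal_pow (sub_pos.2 hr1).le,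
    ENNReal.ofReal_sub _ hr0, ENNReal.ofReal_one, ENNReal.inv_pow]

end ENNReal

theorem summable_prod_pow {d : ℕ} {q : Fin d → ℝ} (hq0 : ∀ s, 0 ≤ q s) (hq1 : ∀ s, q s < 1) :
    Summable fun j : Fin d → ℕ => ∏ s, q s ^ j s := by
  have hfin : ∑' j : Fin d → ℕ, ENNReal.ofReal (∏ s, q s ^ j s) ≠ ∞ := by
    simp_rw [ENNReal.ofReal_prod_of_nonneg fun s _ => pow_nonneg (hq0 s) _,
      ENNReal.ofReal_pow (hq0 _), ENNReal.tsum_prod_pow]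
    exact ENNReal.prod_ne_top fun s _ => ENNReal.inv_ne_top.2 <|
      (tsub_pos_of_lt (ENNReal.ofReal_lt_one.2 (hq1 s))).ne'
  convert ENNReal.summable_toReal hfin with j
  exact (ENNReal.toReal_ofReal (prod_nonneg fun s _ => pow_nonneg (hq0 s) _)).symm

theorem norm_le_of_holder_of_eq_zero {X E : Type*} [PseudoMetricSpace X] [SeminormedAddGroup E]
    {f : X → E} {K α : ℝ} (hK : 0 ≤ K) (hα : 0 ≤ α) (hX : ∀ x y : X, dist x y ≤ 1)
    (hf : ∀ x y, ‖f x - f y‖ ≤ K * dist x y ^ α) {x₀ : X} (h₀ : f x₀ = 0) (x : X) :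
    ‖f x‖ ≤ K :=
  calc ‖f x‖ = ‖f x - f x₀‖ := by rw [h₀, sub_zero]
    _ ≤ K * dist x x₀ ^ α := hf x x₀
    _ ≤ K * 1 := by gcongr; exact Real.rpow_le_one dist_nonneg (hX x x₀) hα
    _ = K := mul_one K

theorem summable_norm_mul_prod_pow {𝕜 : Type*} [NormedField 𝕜] {d : ℕ} {J : Set (Fin d → ℕ)}
    {a : (Fin d → ℕ) → 𝕜} {K R : ℝ} (hR : 0 < R) (ha : ∀ j ∈ J, ‖a j‖ ≤ K / R ^ ∑ s, j s)
    {Z : Fin d → 𝕜} (hZ : ∀ s, ‖Z s‖ < R) :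
    Summable fun j : J => ‖a j * ∏ s, Z s ^ j.1 s‖ := by
  have hgeom := (summable_prod_pow (fun s => div_nonneg (norm_nonneg (Z s)) hR.le)
    fun s => (div_lt_one hR).2 (hZ s)).mul_left K
  refine (hgeom.subtype J).of_nonneg_of_le (fun _ => norm_nonneg _) fun j => ?_
  calc ‖a j * ∏ s, Z s ^ j.1 s‖ = ‖a j‖ * ∏ s, ‖Z s‖ ^ j.1 s := by
        simp only [norm_mul, norm_prod, norm_pow]
    _ ≤ K / R ^ (∑ s, j.1 s) * ∏ s, ‖Z s‖ ^ j.1 s := by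
        gcongr
        exact ha j j.2
    _ = K * ∏ s, (‖Z s‖ / R) ^ j.1 s := by
        simp only [div_pow, prod_div_distrib, prod_pow_eq_pow_sum]
        ring

theorem tsum_ofReal_norm_sq_mul_pow_le {E : Type*} [SeminormedAddGroup E] {d : ℕ}
    {a : (Fin d → ℕ) → E} {K R D δ : ℝ} (hR : R ≠ 0) (hδ : |δ| < 1)
    (ha : ∀ j, 1 ≤ ∑ s, j s → ‖a j‖ ≤ K / R ^ (∑ s, j s) * D) :
    ∑' j : {j : Fin d → ℕ // 1 ≤ ∑ s, j s}, ENNReal.ofReal (‖a j‖ ^ 2 * (δ * R) ^ (2 * ∑ s, j.1 s))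
      ≤ ENNReal.ofReal (K ^ 2 * D ^ 2 * (((1 - δ ^ 2) ^ d)⁻¹ - 1)) := by
  have hterm : ∀ j : {j : Fin d → ℕ // 1 ≤ ∑ s, j s},
      ENNReal.ofReal (‖a j‖ ^ 2 * (δ * R) ^ (2 * ∑ s, j.1 s))
        ≤ ENNReal.ofReal (K ^ 2 * D ^ 2) * ENNReal.ofReal (δ ^ 2) ^ ∑ s, j.1 s := by
    rintro ⟨j, hj⟩
    rw [← ENNReal.ofReal_pow (sq_nonneg δ), ← ENNReal.ofReal_mul (by positivity)]
    refine ENNReal.ofReal_le_ofReal ?_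
    calc ‖a j‖ ^ 2 * (δ * R) ^ (2 * ∑ s, j s)
        ≤ (K / R ^ (∑ s, j s) * D) ^ 2 * (δ * R) ^ (2 * ∑ s, j s) := by
          gcongr
          · exact (even_two_mul _).pow_nonneg _
          · exact ha j hj
      _ = K ^ 2 * D ^ 2 * (δ ^ 2) ^ ∑ s, j s := by
          rw [pow_mul, mul_pow δ R, mul_pow (δ ^ 2), ← pow_mul R, mul_comm 2, pow_mul R]
          field_simp
  calc _ ≤ ∑' j : {j : Fin d → ℕ // 1 ≤ ∑ s, j s},
        ENNReal.ofReal (K ^ 2 * D ^ 2) * ENNReal.ofReal (δ ^ 2) ^ ∑ s, j.1 s :=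
        ENNReal.tsum_le_tsum hterm
    _ = _ := by
      rw [ENNReal.tsum_mul_left, ENNReal.tsum_ofReal_pow_sum_of_one_le (sq_nonneg δ)
        ((sq_lt_one_iff_abs_lt_one δ).2 hδ), ← ENNReal.ofReal_mul (by positivity)]

theorem series_convergence_and_holder_of_coefficients_general
    {X : Type*} [MetricSpace X] [CompactSpace X]
    (hdiam : Metric.diam (Set.univ : Set X) ≤ 1)
    (d : ℕ) (R C α : ℝ) (hR : 0 < R) (hC : 0 < C)
    (hα : α ∈ Set.Ioc (0 : ℝ) 1)
    (t : Fin d → (Fin d → ℕ) → X → ℂ)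
    (hHolder : ∀ (i : Fin d) (j : Fin d → ℕ), 1 ≤ ∑ s, j s →
      ∀ x y : X,
        ‖t i j x - t i j y‖ ≤ C / R ^ (∑ s, j s) * dist x y ^ α)
    (hvanish : ∀ (i : Fin d) (j : Fin d → ℕ), 1 ≤ ∑ s, j s →
      ∃ x₀ : X, t i j x₀ = 0) :
    (∀ (x : X) (i : Fin d) (Z : Fin d → ℂ), (∀ s, ‖Z s‖ < R) →
      Summable fun j : {j : Fin d → ℕ // 1 ≤ ∑ s, j s} =>
        ‖t i j.1 x * ∏ s, Z s ^ j.1 s‖) ∧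
    (∀ δ : ℝ, 0 < δ → δ < 1 → ∀ x y : X,
      (∑' (i : Fin d) (j : {j : Fin d → ℕ // 1 ≤ ∑ s, j s}),
          ENNReal.ofReal
            (‖t i j.1 x - t i j.1 y‖ ^ 2 * (δ * R) ^ (2 * ∑ s, j.1 s)))
        ≤ ENNReal.ofReal
            (d * C ^ 2 * (((1 - δ ^ 2) ^ d)⁻¹ - 1) * dist x y ^ (2 * α))) := by
  have hdist (x y : X) : dist x y ≤ 1 :=
    (Metric.dist_le_diam_of_mem isCompact_univ.isBounded trivial trivial).trans hdiam
  have hbound (i : Fin d) (j : Fin d → ℕ) (hj : 1 ≤ ∑ s, j s) (x : X) :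
      ‖t i j x‖ ≤ C / R ^ (∑ s, j s) :=
    have ⟨_, hx₀⟩ := hvanish i j hj
    norm_le_of_holder_of_eq_zero (by positivity) hα.1.le hdist (hHolder i j hj) hx₀ x
  refine ⟨fun x i Z hZ => summable_norm_mul_prod_pow (J := {j | 1 ≤ ∑ s, j s}) hR
    (fun j hj => hbound i j hj x) hZ, fun δ hδ0 hδ1 x y => ?_⟩
  calc _ ≤ ∑' _ : Fin d,
        ENNReal.ofReal (C ^ 2 * (dist x y ^ α) ^ 2 * (((1 - δ ^ 2) ^ d)⁻¹ - 1)) :=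
        ENNReal.tsum_le_tsum fun i => tsum_ofReal_norm_sq_mul_pow_le hR.ne'
          (abs_lt.2 ⟨by linarith, hδ1⟩) fun j hj => hHolder i j hj x y
    _ = _ := by
      rw [tsum_fintype, sum_const, card_univ, Fintype.card_fin, nsmul_eq_mul,
        ← ENNReal.ofReal_natCast, ← ENNReal.ofReal_mul (Nat.cast_nonneg d),
        ← Real.rpow_mul_natCast dist_nonneg]
      ring_nf

/-- If each coefficient `t^i_j : X → ℂ` is `(C/R^{|j|}, α)`-Hölder and
vanishes somewhere, then the power series `Σ_{|j|≥1} t^i_j(x) Z^j` converges absolutely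
on the open polydisc of radius `R`, and for every `0 < δ < 1` the map
`x ↦ (t^i_j(x))` is Hölder into the Hilbert space of radius `δR`, with
`‖·‖²`-bound `d C² ((1-δ²)^{-d} - 1) dist(x,y)^{2α}`. -/
theorem series_convergence_and_holder_of_coefficients
    {X : Type*} [MetricSpace X] [CompactSpace X]
    (hdiam : Metric.diam (Set.univ : Set X) ≤ 1)
    (d : ℕ) (hd : 1 ≤ d) (R C α : ℝ) (hR : 0 < R) (hC : 0 < C)
    (hα : α ∈ Set.Ioc (0 : ℝ) 1)
    (t : Fin d → (Fin d → ℕ) → X → ℂ)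
    (hHolder : ∀ (i : Fin d) (j : Fin d → ℕ), 1 ≤ ∑ s, j s →
      ∀ x y : X,
        ‖t i j x - t i j y‖ ≤ C / R ^ (∑ s, j s) * dist x y ^ α)
    (hvanish : ∀ (i : Fin d) (j : Fin d → ℕ), 1 ≤ ∑ s, j s →
      ∃ x₀ : X, t i j x₀ = 0) :
    (∀ (x : X) (i : Fin d) (Z : Fin d → ℂ), (∀ s, ‖Z s‖ < R) →
      Summable fun j : {j : Fin d → ℕ // 1 ≤ ∑ s, j s} =>
        ‖t i j.1 x * ∏ s, Z s ^ j.1 s‖) ∧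
    (∀ δ : ℝ, 0 < δ → δ < 1 → ∀ x y : X,
      (∑' (i : Fin d) (j : {j : Fin d → ℕ // 1 ≤ ∑ s, j s}),
          ENNReal.ofReal
            (‖t i j.1 x - t i j.1 y‖ ^ 2 * (δ * R) ^ (2 * ∑ s, j.1 s)))
        ≤ ENNReal.ofReal
            (d * C ^ 2 * (((1 - δ ^ 2) ^ d)⁻¹ - 1) * dist x y ^ (2 * α))) :=
  series_convergence_and_holder_of_coefficients_general hdiam d R C α hR hC hα t hHolder hvanish
end
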